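/- arXiv:1902.07035 — 3 statements merged into one kernel-verified Lean document; each statement's English description precedes it below -/
import Mathlib

section
/- Let N ≥ 1, 0 < s < 1 and C₁ > 0. Then there do NOT exist constants C > 0 and b > 0 such that for all x, y ∈ ℝ^N and all t > 0, C₁ t^{-N/(2s)} (1 + |x-y| t^{-1/(2s)})^{-(N+2s)} ≤ C (4π t)^{-N/2} e^{-|x-y|²/(4bt)}. Equivalently: for every C > 0 and b > 0 there exist t > 0 and x, y ∈ ℝ^N with C₁ t^{-N/(2s)} (1 + |x-y| t^{-1/(2s)})^{-(N+2s)} > C (4π t)^{-N/2} e^{-|x-y|²/(4bt)}. -/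
/-!
Freeze the time at `t = 1` and send `|x - y| = r → ∞`. The fractional lower bound then decays
only polynomially, like `(1 + r)^{-(N + 2s)}`, while the Gaussian bound decays like `e^{-r²/(4b)}`;
since `(1 + r)^p e^{-c r²} → 0` for every `p`, the estimate would force `C₁ ≤ 0`.
-/

open Real Filter Topology

theorem tendsto_one_add_rpow_mul_exp_neg_mul_sq_atTop_nhds_zero (p : ℝ) {c : ℝ} (hc : 0 < c) :
    Tendsto (fun r : ℝ => (1 + r) ^ p * exp (-c * r ^ 2)) atTop (𝓝 0) := by
  have hshift : Tendsto (fun r : ℝ => (1 + r) ^ p * exp (-c * (1 + r))) atTop (𝓝 0) :=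
    (tendsto_rpow_mul_exp_neg_mul_atTop_nhds_zero p c hc).comp
      (tendsto_atTop_add_const_left _ 1 tendsto_id)
  have hnonneg : ∀ᶠ r : ℝ in atTop, 0 ≤ (1 + r) ^ p * exp (-c * r ^ 2) := by
    filter_upwards [eventually_ge_atTop 0] with r hr
    positivity
  refine squeeze_zero' hnonneg ?_ hshift
  filter_upwards [eventually_ge_atTop 2] with r hr
  have hsq : 1 + r ≤ r ^ 2 := by nlinarith
  have hbase : 0 ≤ (1 + r) ^ p := by positivity
  exact mul_le_mul_of_nonneg_left (exp_le_exp.2 (by nlinarith)) hbase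

theorem not_forall_rpow_decay_le_mul_exp_neg_mul_sq {C₁ c : ℝ} (hC₁ : 0 < C₁) (hc : 0 < c)
    (p K : ℝ) : ¬ ∀ r : ℝ, 0 ≤ r → C₁ * (1 + r) ^ (-p) ≤ K * exp (-c * r ^ 2) := by
  intro h
  have hbound : ∀ᶠ r in atTop, C₁ ≤ K * ((1 + r) ^ p * exp (-c * r ^ 2)) := by
    filter_upwards [eventually_ge_atTop 0] with r hr
    have hpos : 0 < (1 + r) ^ p := by positivity
    calc C₁ = C₁ * (1 + r) ^ (-p) * (1 + r) ^ p := by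
          rw [rpow_neg (by positivity), mul_assoc, inv_mul_cancel₀ hpos.ne', mul_one]
      _ ≤ K * exp (-c * r ^ 2) * (1 + r) ^ p := mul_le_mul_of_nonneg_right (h r hr) hpos.le
      _ = K * ((1 + r) ^ p * exp (-c * r ^ 2)) := by ring
  have hlim := (tendsto_one_add_rpow_mul_exp_neg_mul_sq_atTop_nhds_zero p hc).const_mul K
  rw [mul_zero] at hlim
  exact hC₁.not_ge (ge_of_tendsto hlim hbound)

theorem no_gaussian_estimate_for_fractional_kernel_general (N : ℕ) (hN : 1 ≤ N)
    (s C₁ : ℝ) (hC₁ : 0 < C₁) :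
    ¬ ∃ (C b : ℝ), 0 < C ∧ 0 < b ∧
      ∀ (x y : EuclideanSpace ℝ (Fin N)) (t : ℝ), 0 < t →
        C₁ * t ^ (-((N : ℝ) / (2 * s))) *
            (1 + ‖x - y‖ * t ^ (-(1 / (2 * s)))) ^ (-((N : ℝ) + 2 * s)) ≤
          C * (4 * Real.pi * t) ^ (-(N : ℝ) / 2) *
            Real.exp (-‖x - y‖ ^ 2 / (4 * b * t)) := by
  rintro ⟨C, b, -, hb, h⟩
  have : Nonempty (Fin N) := ⟨⟨0, hN⟩⟩
  refine not_forall_rpow_decay_le_mul_exp_neg_mul_sq hC₁ (c := 1 / (4 * b)) (by positivity)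
    (N + 2 * s) (C * (4 * π) ^ (-(N : ℝ) / 2)) fun r hr => ?_
  obtain ⟨x, rfl⟩ := exists_norm_eq (EuclideanSpace ℝ (Fin N)) hr
  have hexp : -‖x‖ ^ 2 / (4 * b) = -(1 / (4 * b)) * ‖x‖ ^ 2 := by ring
  simpa [hexp] using h x 0 1 one_pos

/-- The fractional heat kernel lower bound is not compatible with a Gaussian upper bound:
for `N ≥ 1`, `0 < s < 1` and `C₁ > 0`, there are no constants `C > 0` and `b > 0` such that
`C₁ t^{-N/(2s)} (1 + |x-y| t^{-1/(2s)})^{-(N+2s)} ≤ C (4πt)^{-N/2} e^{-|x-y|²/(4bt)}`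
for all `x, y ∈ ℝ^N` and all `t > 0`. -/
theorem no_gaussian_estimate_for_fractional_kernel (N : ℕ) (hN : 1 ≤ N)
    (s C₁ : ℝ) (hs0 : 0 < s) (hs1 : s < 1) (hC₁ : 0 < C₁) :
    ¬ ∃ (C b : ℝ), 0 < C ∧ 0 < b ∧
      ∀ (x y : EuclideanSpace ℝ (Fin N)) (t : ℝ), 0 < t →
        C₁ * t ^ (-((N : ℝ) / (2 * s))) *
            (1 + ‖x - y‖ * t ^ (-(1 / (2 * s)))) ^ (-((N : ℝ) + 2 * s)) ≤
          C * (4 * Real.pi * t) ^ (-(N : ℝ) / 2) *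
            Real.exp (-‖x - y‖ ^ 2 / (4 * b * t)) :=
  no_gaussian_estimate_for_fractional_kernel_general N hN s C₁ hC₁
end

section
/- Let (X, μ) be a measure space and let T, S : [0,∞) → ℒ(L²(X,μ;ℝ)) be two families of bounded linear operators on real L²(X,μ) satisfying the semigroup laws T(t+τ) = T(t)∘T(τ) and S(t+τ) = S(t)∘S(τ) for all t, τ ≥ 0, with S(0) the identity. Assume S is positivity preserving: if f ≥ 0 a.e. then S(t)f ≥ 0 a.e. for every t ≥ 0. Let M ≥ 1 and b > 0, and assume the domination |T(t)f| ≤ M · S(bt)|f| a.e., for all 0 ≤ t ≤ 1 and all f ∈ L²(X,μ). Then for every t ≥ 0 and every f ∈ L²(X,μ), |T(t)f| ≤ M e^{ω t} S(bt)|f| a.e., where ω := log M. -/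
/-!
Write `t = n + s` with `n = ⌊t⌋₊` and `0 ≤ s < 1`. Peeling off `T(1)` and using the
semigroup laws, each unit of time costs one factor `M`: the estimate for `T(1)` is applied to
`T(n - 1 + s) f`, and positivity of `S(b)` carries the inductive bound through `S(b)`. This gives
`|T(t)f| ≤ M^(n+1) S(bt)|f|`, and `M^n = e^{n log M} ≤ e^{t log M}` since `M ≥ 1`.
-/

open MeasureTheory

instance Lp.instIsOrderedModule {X : Type*} [MeasurableSpace X] {μ : Measure X}
    {p : ENNReal} : IsOrderedModule ℝ (Lp ℝ p μ) :=
  .of_smul_nonneg fun c hc f hf => by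
    rw [← Lp.coeFn_nonneg] at hf ⊢
    filter_upwards [hf, Lp.coeFn_smul c f] with x hfx hcfx
    rw [hcfx]
    exact mul_nonneg hc hfx

section Domination

variable {E : Type*} [AddCommGroup E] [Lattice E] [IsOrderedAddMonoid E] [Module ℝ E]
  [IsOrderedModule ℝ E] [TopologicalSpace E] {T S : ℝ → E →L[ℝ] E} {M b : ℝ}

theorem abs_apply_nat_add_le_pow_smul
    (hTsg : ∀ t τ : ℝ, 0 ≤ t → 0 ≤ τ → T (t + τ) = (T t).comp (T τ))
    (hSsg : ∀ t τ : ℝ, 0 ≤ t → 0 ≤ τ → S (t + τ) = (S t).comp (S τ))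
    (hSpos : ∀ t : ℝ, 0 ≤ t → ∀ f : E, 0 ≤ f → 0 ≤ S t f) (hM : 0 ≤ M) (hb : 0 ≤ b)
    (hdom : ∀ t : ℝ, 0 ≤ t → t ≤ 1 → ∀ f : E, |T t f| ≤ M • S (b * t) |f|)
    (n : ℕ) {s : ℝ} (hs₀ : 0 ≤ s) (hs₁ : s ≤ 1) (f : E) :
    |T (n + s) f| ≤ M ^ (n + 1) • S (b * (n + s)) |f| := by
  induction n with
  | zero => simpa using hdom s hs₀ hs₁ f
  | succ n ih =>
    have hns : 0 ≤ (n : ℝ) + s := by positivity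
    have hS_mono : Monotone (S b) := (monotone_iff_map_nonneg (S b)).2 (hSpos b hb)
    have hT_split : T ((n + 1 : ℕ) + s) f = T 1 (T (n + s) f) := by
      rw [show ((n + 1 : ℕ) : ℝ) + s = 1 + (n + s) by push_cast; ring, hTsg 1 _ zero_le_one hns]
      rfl
    have hS_split : S b (S (b * (n + s)) |f|) = S (b * ((n + 1 : ℕ) + s)) |f| := by
      rw [show b * ((n + 1 : ℕ) + s) = b + b * (n + s) by push_cast; ring,
        hSsg b _ hb (mul_nonneg hb hns)]
      rfl
    calc |T ((n + 1 : ℕ) + s) f|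
        ≤ M • S b |T (n + s) f| := by
          rw [hT_split]; simpa using hdom 1 zero_le_one le_rfl (T (n + s) f)
      _ ≤ M • S b (M ^ (n + 1) • S (b * (n + s)) |f|) :=
          smul_le_smul_of_nonneg_left (hS_mono ih) hM
      _ = M ^ (n + 1 + 1) • S (b * ((n + 1 : ℕ) + s)) |f| := by
          rw [map_smul, hS_split, smul_smul, pow_succ' M (n + 1)]

end Domination

theorem pow_floor_le_exp_log_mul {M t : ℝ} (hM : 1 ≤ M) (ht : 0 ≤ t) :
    M ^ ⌊t⌋₊ ≤ Real.exp (Real.log M * t) :=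
  calc M ^ ⌊t⌋₊ = Real.exp (Real.log M * ⌊t⌋₊) := by
        rw [mul_comm, Real.exp_nat_mul, Real.exp_log (by linarith)]
    _ ≤ Real.exp (Real.log M * t) :=
        Real.exp_le_exp.2 (mul_le_mul_of_nonneg_left (Nat.floor_le ht) (Real.log_nonneg hM))

theorem domination_extends_to_all_times_general {X : Type*} [MeasurableSpace X] (μ : Measure X)
    (T S : ℝ → Lp ℝ 2 μ →L[ℝ] Lp ℝ 2 μ)
    (hTsg : ∀ t τ : ℝ, 0 ≤ t → 0 ≤ τ → T (t + τ) = (T t).comp (T τ))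
    (hSsg : ∀ t τ : ℝ, 0 ≤ t → 0 ≤ τ → S (t + τ) = (S t).comp (S τ))
    (hSpos : ∀ t : ℝ, 0 ≤ t → ∀ f : Lp ℝ 2 μ, 0 ≤ f → 0 ≤ S t f)
    (M b : ℝ) (hM : 1 ≤ M) (hb : 0 < b)
    (hdom : ∀ t : ℝ, 0 ≤ t → t ≤ 1 → ∀ f : Lp ℝ 2 μ, |T t f| ≤ M • S (b * t) |f|)
    (t : ℝ) (ht : 0 ≤ t) (f : Lp ℝ 2 μ) :
    |T t f| ≤ (M * Real.exp (Real.log M * t)) • S (b * t) |f| := by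
  set n := ⌊t⌋₊
  have hfrac₀ : 0 ≤ t - n := sub_nonneg.2 (Nat.floor_le ht)
  have hfrac₁ : t - n ≤ 1 := by linarith [Nat.lt_floor_add_one t]
  have hbound := abs_apply_nat_add_le_pow_smul hTsg hSsg hSpos (by linarith) hb.le hdom n
    hfrac₀ hfrac₁ f
  rw [add_sub_cancel] at hbound
  refine hbound.trans (smul_le_smul_of_nonneg_right ?_ (hSpos _ (by positivity) _ (abs_nonneg f)))
  rw [pow_succ']
  exact mul_le_mul_of_nonneg_left (pow_floor_le_exp_log_mul hM ht) (by linarith)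

/-- Extension of a domination estimate from `0 ≤ t ≤ 1` to all `t ≥ 0`: if `T`, `S` are
semigroups of bounded operators on real `L²(X,μ)`, `S` is positivity preserving, and
`|T(t)f| ≤ M · S(bt)|f|` for `0 ≤ t ≤ 1`, then
`|T(t)f| ≤ M e^{ωt} S(bt)|f|` for all `t ≥ 0`, where `ω = log M`. -/
theorem domination_extends_to_all_times {X : Type*} [MeasurableSpace X] (μ : Measure X)
    (T S : ℝ → Lp ℝ 2 μ →L[ℝ] Lp ℝ 2 μ)
    (hTsg : ∀ t τ : ℝ, 0 ≤ t → 0 ≤ τ → T (t + τ) = (T t).comp (T τ))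
    (hSsg : ∀ t τ : ℝ, 0 ≤ t → 0 ≤ τ → S (t + τ) = (S t).comp (S τ))
    (hS0 : S 0 = ContinuousLinearMap.id ℝ (Lp ℝ 2 μ))
    (hSpos : ∀ t : ℝ, 0 ≤ t → ∀ f : Lp ℝ 2 μ, 0 ≤ f → 0 ≤ S t f)
    (M b : ℝ) (hM : 1 ≤ M) (hb : 0 < b)
    (hdom : ∀ t : ℝ, 0 ≤ t → t ≤ 1 → ∀ f : Lp ℝ 2 μ, |T t f| ≤ M • S (b * t) |f|)
    (t : ℝ) (ht : 0 ≤ t) (f : Lp ℝ 2 μ) :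
    |T t f| ≤ (M * Real.exp (Real.log M * t)) • S (b * t) |f| :=
  domination_extends_to_all_times_general μ T S hTsg hSsg hSpos M b hM hb hdom t ht f
end

section
/- Let N ≥ 1, 0 < s < 1, let Ω ⊆ ℝ^N, let 0 < θ₂ < π/2, and let b, C > 0. Let K : Σ(θ₂) × Ω × Ω → ℂ be such that for all x, y ∈ Ω the map z ↦ K(z,x,y) is holomorphic on the sector Σ(θ₂), and assume: (1) |K(z,x,y)| ≤ C (Re z)^{-N/(2s)} for all x, y ∈ Ω and all z ∈ Σ(θ₂); and (2) |K(t,x,y)| ≤ C t^{-N/(2s)} (1 + |x-y| (bt)^{-1/(2s)})^{-(N+2s)} for all x, y ∈ Ω and all real t > 0. Then for every ε ∈ (0,1] and every θ₁ ∈ (0, ε θ₂) there is a constant C' > 0 such that |K(z,x,y)| ≤ C' (Re z)^{-N/(2s)} (1 + |x-y| (b|z|)^{-1/(2s)})^{-(N+2s)(1-ε)} for all x, y ∈ Ω and all z ∈ Σ(θ₁). -/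
/-!
Fix `z` with `|arg z| ≤ θ' < θ₂` and put `r = |z|`, `p = N/(2s)`, `β = (N+2s)/(2s)` and
`ξ(t) = (1 + |x-y| (bt)^{-1/(2s)})^{-(N+2s)}`. The function `g(w) = w^p K(w) (1 + w/r)^{-β}` is
holomorphic on the sector and, by the bound in terms of `Re w`, bounded by `M = C cos(θ')^{-p}` on
`|arg w| ≤ θ'`. On the positive axis the off-diagonal bound gives `|g(t)| ≤ M ξ(r)`, because
`ξ(t) ≤ (1 + t/r)^β ξ(r)`. Hadamard's three lines theorem, transported to the sector by
`ζ ↦ r e^{±iθ'ζ}`, interpolates between the two rays: `|g(z)| ≤ M ξ(r)^{1 - |arg z|/θ'}`, and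
`|arg z|/θ' ≤ ε` once `θ₁/ε < θ' < θ₂`.
-/

open Complex Real Set

def sector (θ : ℝ) : Set ℂ := {z : ℂ | z ≠ 0 ∧ |z.arg| < θ}

lemma isOpen_sector {θ : ℝ} (hθ : θ ≤ π) : IsOpen (sector θ) := by
  rw [isOpen_iff_mem_nhds]
  rintro z ⟨hz, hzθ⟩
  have hslit : z ∈ slitPlane :=
    mem_slitPlane_iff_arg.2 ⟨fun h => by rw [h, abs_of_pos pi_pos] at hzθ; linarith, hz⟩
  exact (eventually_ne_nhds hz).and ((continuousAt_arg hslit).abs.eventually_lt_const hzθ)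

lemma re_pos_of_mem_sector {θ : ℝ} (hθ : θ ≤ π / 2) {z : ℂ} (hz : z ∈ sector θ) : 0 < z.re :=
  (abs_arg_lt_pi_div_two_iff.1 (hz.2.trans_le hθ)).resolve_right hz.1

lemma norm_mul_cos_le_re {θ : ℝ} (hθ : θ ≤ π) {z : ℂ} (hz : |z.arg| ≤ θ) :
    ‖z‖ * Real.cos θ ≤ z.re := by
  rw [← norm_mul_cos_arg z, ← Real.cos_abs z.arg]
  exact mul_le_mul_of_nonneg_left
    (cos_le_cos_of_nonneg_of_le_pi (abs_nonneg _) hθ hz) (norm_nonneg z)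

open HadamardThreeLines in
lemma norm_le_interp_of_ray {g : ℂ → ℂ} {θ φ a c ρ u : ℝ} (hθ : θ ≤ π) (hφ : |φ| < θ)
    (hg : DifferentiableOn ℂ g (sector θ)) (ha : ∀ t : ℝ, 0 < t → ‖g t‖ ≤ a)
    (hc : ∀ z : ℂ, z ≠ 0 → |z.arg| ≤ |φ| → ‖g z‖ ≤ c) (hρ : 0 < ρ) (hu : u ∈ Icc (0 : ℝ) 1) :
    ‖g (ρ * exp (φ * u * I))‖ ≤ a ^ (1 - u) * c ^ u := by
  set e : ℂ → ℂ := fun ζ => ρ * exp (φ * ζ * I)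
  have he_ne : ∀ ζ, e ζ ≠ 0 := fun ζ => mul_ne_zero (by exact_mod_cast hρ.ne') (exp_ne_zero _)
  have habs : ∀ ζ ∈ verticalClosedStrip 0 1, |φ * ζ.re| ≤ |φ| := fun ζ hζ => by
    rw [abs_mul, abs_of_nonneg hζ.1]
    exact mul_le_of_le_one_right (abs_nonneg φ) hζ.2
  have harg : ∀ ζ ∈ verticalClosedStrip 0 1, (e ζ).arg = φ * ζ.re := fun ζ hζ => by
    have hlt := abs_lt.1 ((habs ζ hζ).trans_lt (hφ.trans_le hθ))
    have him : (φ * ζ * I).im = φ * ζ.re := by simp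
    rw [arg_real_mul _ hρ, arg_exp, him, toIocMod_eq_self]
    exact ⟨hlt.1, by linarith⟩
  have hmem : ∀ ζ ∈ verticalClosedStrip 0 1, |(e ζ).arg| ≤ |φ| := fun ζ hζ => by
    rw [harg ζ hζ]; exact habs ζ hζ
  have hdiff : DifferentiableOn ℂ (g ∘ e) (verticalClosedStrip 0 1) := fun ζ hζ =>
    (((hg.differentiableAt ((isOpen_sector hθ).mem_nhds
      ⟨he_ne ζ, (hmem ζ hζ).trans_lt hφ⟩)).comp ζ (by fun_prop))).differentiableWithinAt
  have hcl : closure (verticalStrip 0 1) = verticalClosedStrip 0 1 := by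
    rw [verticalStrip, closure_preimage_re, closure_Ioo zero_ne_one]; rfl
  have hreal : ∀ ζ ∈ re ⁻¹' {0}, e ζ = ↑(ρ * Real.exp (-(φ * ζ.im))) := fun ζ hζ => by
    have hexp : (φ : ℂ) * ζ * I = ↑(-(φ * ζ.im)) := Complex.ext (by simp_all) (by simp_all)
    simp only [e, hexp, ofReal_mul, ofReal_exp]
  have key := norm_le_interp_of_mem_verticalClosedStrip₀₁' (g ∘ e) (z := u)
    (by simpa [verticalClosedStrip] using hu) (hcl ▸ hdiff).diffContOnCl
    ⟨c, forall_mem_image.2 fun ζ hζ => hc _ (he_ne ζ) (hmem ζ hζ)⟩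
    (fun ζ hζ => by simpa only [Function.comp, hreal ζ hζ] using ha _ (by positivity))
    (fun ζ hζ => hc _ (he_ne ζ) (hmem ζ (by simp_all [verticalClosedStrip])))
  simpa using key

lemma norm_le_interp_of_abs_arg_le {g : ℂ → ℂ} {θ θ' a c : ℝ} (hθ : θ ≤ π) (hθ' : θ' < θ)
    (hg : DifferentiableOn ℂ g (sector θ)) (ha : ∀ t : ℝ, 0 < t → ‖g t‖ ≤ a)
    (hc : ∀ z : ℂ, z ≠ 0 → |z.arg| ≤ θ' → ‖g z‖ ≤ c) {z : ℂ} (hz : z ≠ 0)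
    (hzθ' : |z.arg| ≤ θ') :
    ‖g z‖ ≤ a ^ (1 - |z.arg| / θ') * c ^ (|z.arg| / θ') := by
  have hθ'0 : 0 ≤ θ' := (abs_nonneg _).trans hzθ'
  obtain ⟨φ, hφ, hφu⟩ : ∃ φ : ℝ, |φ| = θ' ∧ φ * (|z.arg| / θ') = z.arg := by
    rcases hθ'0.eq_or_lt with rfl | hpos
    · exact ⟨0, abs_zero, by simp [abs_nonpos_iff.1 hzθ']⟩
    rcases le_total 0 z.arg with h0 | h0
    · exact ⟨θ', abs_of_pos hpos, by rw [abs_of_nonneg h0]; field_simp⟩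
    · exact ⟨-θ', by rw [abs_neg, abs_of_pos hpos], by rw [abs_of_nonpos h0]; field_simp⟩
  have key := norm_le_interp_of_ray hθ (hφ ▸ hθ') hg ha (hφ ▸ hc) (norm_pos_iff.2 hz)
    ⟨div_nonneg (abs_nonneg _) hθ'0, div_le_one_of_le₀ hzθ' hθ'0⟩
  rwa [← ofReal_mul, hφu, norm_mul_exp_arg_mul_I] at key

lemma one_add_mul_rpow_neg_le {d q r t : ℝ} (hd : 0 ≤ d) (hq : 0 ≤ q) (hr : 0 < r) (ht : 0 < t) :
    1 + d * r ^ (-q) ≤ (1 + d * t ^ (-q)) * (1 + t / r) ^ q := by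
  have hone : 1 ≤ (1 + t / r) ^ q := one_le_rpow (by linarith [div_pos ht hr]) hq
  have hr_t : r ^ (-q) ≤ t ^ (-q) * (1 + t / r) ^ q :=
    calc r ^ (-q) = t ^ (-q) * (t / r) ^ q := by
          rw [div_rpow ht.le hr.le, rpow_neg ht.le, rpow_neg hr.le]
          field_simp [(rpow_pos_of_pos ht q).ne']
      _ ≤ t ^ (-q) * (1 + t / r) ^ q := by gcongr; linarith
  calc 1 + d * r ^ (-q) ≤ (1 + t / r) ^ q + d * (t ^ (-q) * (1 + t / r) ^ q) :=
        add_le_add hone (mul_le_mul_of_nonneg_left hr_t hd)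
    _ = (1 + d * t ^ (-q)) * (1 + t / r) ^ q := by ring

lemma one_add_mul_rpow_neg_rpow_neg_le {d b q α r t : ℝ} (hd : 0 ≤ d) (hb : 0 < b) (hq : 0 ≤ q)
    (hα : 0 ≤ α) (hr : 0 < r) (ht : 0 < t) :
    (1 + d * (b * t) ^ (-q)) ^ (-α) ≤ (1 + t / r) ^ (α * q) * (1 + d * (b * r) ^ (-q)) ^ (-α) := by
  have key := one_add_mul_rpow_neg_le hd hq (mul_pos hb hr) (mul_pos hb ht)
  rw [mul_div_mul_left _ _ hb.ne'] at key
  have hY : 0 < 1 + d * (b * t) ^ (-q) := by positivity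
  have hZ : 0 < 1 + t / r := by positivity
  calc (1 + d * (b * t) ^ (-q)) ^ (-α)
      = (1 + t / r) ^ (α * q) * ((1 + d * (b * t) ^ (-q)) * (1 + t / r) ^ q) ^ (-α) := by
        rw [mul_rpow hY.le (rpow_nonneg hZ.le _), ← rpow_mul hZ.le, mul_left_comm,
          ← rpow_add hZ]
        ring_nf; simp
    _ ≤ (1 + t / r) ^ (α * q) * (1 + d * (b * r) ^ (-q)) ^ (-α) := mul_le_mul_of_nonneg_left
        (rpow_le_rpow_of_nonpos (by positivity) key (neg_nonpos.2 hα)) (by positivity)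

noncomputable def weighted (f : ℂ → ℂ) (p β r : ℝ) (z : ℂ) : ℂ :=
  z ^ (p : ℂ) * f z * (1 + z / r) ^ ((-β : ℝ) : ℂ)

section weighted

variable {f : ℂ → ℂ} {θ p β C r : ℝ}

lemma norm_weighted (z : ℂ) :
    ‖weighted f p β r z‖ = ‖z‖ ^ p * ‖f z‖ * ‖1 + z / r‖ ^ (-β) := by
  simp only [weighted, norm_mul, norm_cpow_real]

lemma one_le_norm_one_add_div {z : ℂ} (hz : 0 ≤ z.re) (hr : 0 < r) : 1 ≤ ‖1 + z / r‖ :=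
  calc 1 ≤ (1 + z / r).re := by
        rw [add_re, one_re, div_ofReal_re]; linarith [div_nonneg hz hr.le]
    _ ≤ ‖1 + z / r‖ := re_le_norm _

lemma differentiableOn_weighted (hθ : θ ≤ π / 2) (hr : 0 < r)
    (hf : DifferentiableOn ℂ f (sector θ)) : DifferentiableOn ℂ (weighted f p β r) (sector θ) := by
  intro z hz
  have hre := re_pos_of_mem_sector hθ hz
  have hre' : 0 < (1 + z / r).re := by
    rw [add_re, one_re, div_ofReal_re]; positivity
  have hpow : DifferentiableAt ℂ (fun w : ℂ => (1 + w / r) ^ ((-β : ℝ) : ℂ)) z :=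
    DifferentiableAt.cpow_const (f := fun w : ℂ => 1 + w / r) (by fun_prop) (Or.inl hre')
  exact ((differentiableAt_id.cpow_const (Or.inl hre)).differentiableWithinAt.mul (hf z hz)).mul
    hpow.differentiableWithinAt

lemma norm_weighted_le_of_abs_arg_le {θ' : ℝ} (hθ : θ ≤ π / 2) (hθ' : θ' < θ) (hp : 0 ≤ p)
    (hβ : 0 ≤ β) (hC : 0 ≤ C) (hr : 0 < r) (hsec : ∀ z ∈ sector θ, ‖f z‖ ≤ C * z.re ^ (-p))
    {z : ℂ} (hz : z ≠ 0) (hzθ' : |z.arg| ≤ θ') :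
    ‖weighted f p β r z‖ ≤ C * Real.cos θ' ^ (-p) := by
  have hnorm : 0 < ‖z‖ := norm_pos_iff.2 hz
  have hcos : 0 < Real.cos θ' :=
    cos_pos_of_mem_Ioo ⟨by linarith [abs_nonneg z.arg, pi_pos], by linarith⟩
  have hre := norm_mul_cos_le_re (by linarith [pi_pos]) hzθ'
  have hfz : ‖f z‖ ≤ C * (‖z‖ * Real.cos θ') ^ (-p) :=
    (hsec z ⟨hz, hzθ'.trans_lt hθ'⟩).trans (mul_le_mul_of_nonneg_left
      (rpow_le_rpow_of_nonpos (by positivity) hre (neg_nonpos.2 hp)) hC)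
  have hone : ‖1 + z / r‖ ^ (-β) ≤ 1 := rpow_le_one_of_one_le_of_nonpos
    (one_le_norm_one_add_div (le_trans (by positivity) hre) hr) (neg_nonpos.2 hβ)
  rw [norm_weighted]
  calc ‖z‖ ^ p * ‖f z‖ * ‖1 + z / r‖ ^ (-β)
      ≤ ‖z‖ ^ p * (C * (‖z‖ * Real.cos θ') ^ (-p)) * 1 := by gcongr
    _ = C * Real.cos θ' ^ (-p) := by
        rw [mul_rpow hnorm.le hcos.le, rpow_neg hnorm.le]
        field_simp [(rpow_pos_of_pos hnorm p).ne']

lemma norm_weighted_ofReal_le {w : ℝ → ℝ} (hC : 0 ≤ C) (hr : 0 < r)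
    (hreal : ∀ t : ℝ, 0 < t → ‖f t‖ ≤ C * t ^ (-p) * w t)
    (hw : ∀ t : ℝ, 0 < t → w t ≤ (1 + t / r) ^ β * w r) {t : ℝ} (ht : 0 < t) :
    ‖weighted f p β r t‖ ≤ C * w r := by
  have hZ : 0 < 1 + t / r := by positivity
  have hnorm : ‖1 + (t : ℂ) / r‖ = 1 + t / r := by
    rw [← ofReal_div, ← ofReal_one, ← ofReal_add, norm_real, norm_of_nonneg hZ.le]
  have hwt : w t * (1 + t / r) ^ (-β) ≤ w r := by
    rw [rpow_neg hZ.le, ← div_eq_mul_inv, div_le_iff₀ (by positivity), mul_comm]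
    exact hw t ht
  rw [norm_weighted, hnorm, norm_real, norm_of_nonneg ht.le]
  calc t ^ p * ‖f t‖ * (1 + t / r) ^ (-β)
      ≤ t ^ p * (C * t ^ (-p) * w t) * (1 + t / r) ^ (-β) := by gcongr; exact hreal t ht
    _ = C * (w t * (1 + t / r) ^ (-β)) := by
        rw [rpow_neg ht.le]; field_simp [(rpow_pos_of_pos ht p).ne']
    _ ≤ C * w r := by gcongr

end weighted

lemma norm_le_of_sector_bound_of_real_bound {f : ℂ → ℂ} {w : ℝ → ℝ} {θ θ' p β C : ℝ}
    (hθ : θ ≤ π / 2) (hθ' : θ' < θ) (hp : 0 ≤ p) (hβ : 0 ≤ β) (hC : 0 ≤ C)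
    (hf : DifferentiableOn ℂ f (sector θ)) (hsec : ∀ z ∈ sector θ, ‖f z‖ ≤ C * z.re ^ (-p))
    (hreal : ∀ t : ℝ, 0 < t → ‖f t‖ ≤ C * t ^ (-p) * w t) (hw_nonneg : ∀ t : ℝ, 0 < t → 0 ≤ w t)
    (hw : ∀ r t : ℝ, 0 < r → 0 < t → w t ≤ (1 + t / r) ^ β * w r) {z : ℂ} (hz : z ≠ 0)
    (hzθ' : |z.arg| ≤ θ') :
    ‖f z‖ ≤ 2 ^ β * (C * Real.cos θ' ^ (-p)) * z.re ^ (-p) * w ‖z‖ ^ (1 - |z.arg| / θ') := by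
  set r := ‖z‖
  set u := |z.arg| / θ'
  set M := C * Real.cos θ' ^ (-p)
  have hr : 0 < r := norm_pos_iff.2 hz
  have hξ := hw_nonneg r hr
  have hcos : 0 < Real.cos θ' :=
    cos_pos_of_mem_Ioo ⟨by linarith [abs_nonneg z.arg, pi_pos], by linarith⟩
  have hM : 0 ≤ M := by positivity
  have hCM : C ≤ M := le_mul_of_one_le_right hC
    (one_le_rpow_of_pos_of_le_one_of_nonpos hcos (cos_le_one θ') (neg_nonpos.2 hp))
  have hre : 0 < z.re := re_pos_of_mem_sector hθ ⟨hz, hzθ'.trans_lt hθ'⟩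
  have hinterp := norm_le_interp_of_abs_arg_le (a := M * w r) (c := M) (by linarith [pi_pos])
    hθ' (differentiableOn_weighted (p := p) (β := β) hθ hr hf)
    (fun t ht => (norm_weighted_ofReal_le hC hr hreal (hw r · hr) ht).trans
      (mul_le_mul_of_nonneg_right hCM hξ))
    (fun ζ hζ hζθ' => norm_weighted_le_of_abs_arg_le hθ hθ' hp hβ hC hr hsec hζ hζθ') hz hzθ'
  rw [mul_rpow hM hξ, mul_right_comm, ← rpow_add' hM (by simp), sub_add_cancel, rpow_one,
    norm_weighted] at hinterp
  have htwo : 2 ^ (-β) ≤ ‖1 + z / r‖ ^ (-β) := by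
    refine rpow_le_rpow_of_nonpos (by linarith [one_le_norm_one_add_div hre.le hr]) ?_
      (neg_nonpos.2 hβ)
    calc ‖1 + z / r‖ ≤ ‖(1 : ℂ)‖ + ‖z / r‖ := norm_add_le _ _
      _ = 2 := by rw [norm_one, norm_div, norm_real, norm_of_nonneg hr.le, div_self hr.ne']; norm_num
  calc ‖f z‖ = 2 ^ β * r ^ (-p) * (r ^ p * ‖f z‖ * 2 ^ (-β)) := by
        rw [rpow_neg hr.le, rpow_neg zero_le_two]
        field_simp [(rpow_pos_of_pos hr p).ne', (rpow_pos_of_pos two_pos β).ne']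
    _ ≤ 2 ^ β * r ^ (-p) * (M * w r ^ (1 - u)) := mul_le_mul_of_nonneg_left
        ((mul_le_mul_of_nonneg_left htwo (by positivity)).trans hinterp) (by positivity)
    _ ≤ 2 ^ β * z.re ^ (-p) * (M * w r ^ (1 - u)) := mul_le_mul_of_nonneg_right
        (mul_le_mul_of_nonneg_left (rpow_le_rpow_of_nonpos hre (re_le_norm z) (neg_nonpos.2 hp))
          (by positivity)) (by positivity)
    _ = 2 ^ β * M * z.re ^ (-p) * w r ^ (1 - u) := by ring

theorem fractional_kernel_complex_time_bounds_general (N : ℕ) (s : ℝ)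
    (hs0 : 0 < s)
    (Ω : Set (EuclideanSpace ℝ (Fin N))) (θ₂ : ℝ) (hθ₂ : θ₂ < Real.pi / 2)
    (b C : ℝ) (hb : 0 < b) (hC : 0 < C)
    (K : ℂ → EuclideanSpace ℝ (Fin N) → EuclideanSpace ℝ (Fin N) → ℂ)
    (hKhol : ∀ x ∈ Ω, ∀ y ∈ Ω,
      DifferentiableOn ℂ (fun z => K z x y) {z : ℂ | z ≠ 0 ∧ |z.arg| < θ₂})
    (h1 : ∀ x ∈ Ω, ∀ y ∈ Ω, ∀ z ∈ {z : ℂ | z ≠ 0 ∧ |z.arg| < θ₂},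
      ‖K z x y‖ ≤ C * z.re ^ (-((N : ℝ) / (2 * s))))
    (h2 : ∀ x ∈ Ω, ∀ y ∈ Ω, ∀ t : ℝ, 0 < t →
      ‖K (t : ℂ) x y‖ ≤ C * t ^ (-((N : ℝ) / (2 * s))) *
        (1 + ‖x - y‖ * (b * t) ^ (-(1 / (2 * s)))) ^ (-((N : ℝ) + 2 * s))) :
    ∀ ε : ℝ, 0 < ε → ε ≤ 1 → ∀ θ₁ : ℝ, 0 < θ₁ → θ₁ < ε * θ₂ →
      ∃ C' : ℝ, 0 < C' ∧ ∀ x ∈ Ω, ∀ y ∈ Ω, ∀ z ∈ {z : ℂ | z ≠ 0 ∧ |z.arg| < θ₁},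
        ‖K z x y‖ ≤ C' * z.re ^ (-((N : ℝ) / (2 * s))) *
          (1 + ‖x - y‖ * (b * ‖z‖) ^ (-(1 / (2 * s)))) ^
            (-(((N : ℝ) + 2 * s) * (1 - ε))) := by
  intro ε hε hε1 θ₁ hθ₁ hθ₁ε
  obtain ⟨θ', hθ'₁, hθ'₂⟩ := exists_between ((div_lt_iff₀' hε).2 hθ₁ε)
  have hθ' : 0 < θ' := (div_pos hθ₁ hε).trans hθ'₁
  have hcos : 0 < Real.cos θ' := cos_pos_of_mem_Ioo ⟨by linarith, by linarith⟩
  refine ⟨2 ^ (((N : ℝ) + 2 * s) * (1 / (2 * s))) *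
    (C * Real.cos θ' ^ (-((N : ℝ) / (2 * s)))), by positivity, ?_⟩
  have hθ₁θ' : θ₁ < ε * θ' := (div_lt_iff₀' hε).1 hθ'₁
  have hεθ' : ε * θ' ≤ θ' := mul_le_of_le_one_left hθ'.le hε1
  rintro x hx y hy z ⟨hz, hzθ₁⟩
  refine (norm_le_of_sector_bound_of_real_bound (f := (K · x y)) hθ₂.le hθ'₂ (by positivity)
    (by positivity) hC.le (hKhol x hx y hy) (h1 x hx y hy) (h2 x hx y hy)
    (fun t ht => by positivity)
    (fun r t hr ht => one_add_mul_rpow_neg_rpow_neg_le (norm_nonneg _) hb (by positivity)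
      (by positivity) hr ht) hz (by linarith)).trans ?_
  have hre : 0 < z.re := re_pos_of_mem_sector hθ₂.le ⟨hz, by linarith⟩
  have hw_z : 0 < 1 + ‖x - y‖ * (b * ‖z‖) ^ (-(1 / (2 * s))) := by positivity
  rw [← neg_mul, rpow_mul hw_z.le]
  refine mul_le_mul_of_nonneg_left (rpow_le_rpow_of_exponent_ge (rpow_pos_of_pos hw_z _)
    (rpow_le_one_of_one_le_of_nonpos ?_ (neg_nonpos.2 (by positivity))) ?_) (by positivity)
  · exact le_add_of_nonneg_right (by positivity)
  · have : |z.arg| / θ' ≤ ε := (div_le_iff₀ hθ').2 (by linarith)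
    linarith

/-- Key kernel estimate: if `K(z,x,y)` is holomorphic in `z` on the sector
`Σ(θ₂) = {z ≠ 0 : |arg z| < θ₂}`, satisfies `|K(z,x,y)| ≤ C (Re z)^{-N/(2s)}` on `Σ(θ₂)` and
`|K(t,x,y)| ≤ C t^{-N/(2s)} (1 + |x-y|(bt)^{-1/(2s)})^{-(N+2s)}` for real `t > 0`, then for
every `ε ∈ (0,1]` and `θ₁ ∈ (0, εθ₂)` there is `C' > 0` such that
`|K(z,x,y)| ≤ C' (Re z)^{-N/(2s)} (1 + |x-y|(b|z|)^{-1/(2s)})^{-(N+2s)(1-ε)}` on `Σ(θ₁)`. -/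
theorem fractional_kernel_complex_time_bounds (N : ℕ) (hN : 1 ≤ N) (s : ℝ)
    (hs0 : 0 < s) (hs1 : s < 1)
    (Ω : Set (EuclideanSpace ℝ (Fin N))) (θ₂ : ℝ) (hθ₂0 : 0 < θ₂) (hθ₂ : θ₂ < Real.pi / 2)
    (b C : ℝ) (hb : 0 < b) (hC : 0 < C)
    (K : ℂ → EuclideanSpace ℝ (Fin N) → EuclideanSpace ℝ (Fin N) → ℂ)
    (hKhol : ∀ x ∈ Ω, ∀ y ∈ Ω,
      DifferentiableOn ℂ (fun z => K z x y) {z : ℂ | z ≠ 0 ∧ |z.arg| < θ₂})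
    (h1 : ∀ x ∈ Ω, ∀ y ∈ Ω, ∀ z ∈ {z : ℂ | z ≠ 0 ∧ |z.arg| < θ₂},
      ‖K z x y‖ ≤ C * z.re ^ (-((N : ℝ) / (2 * s))))
    (h2 : ∀ x ∈ Ω, ∀ y ∈ Ω, ∀ t : ℝ, 0 < t →
      ‖K (t : ℂ) x y‖ ≤ C * t ^ (-((N : ℝ) / (2 * s))) *
        (1 + ‖x - y‖ * (b * t) ^ (-(1 / (2 * s)))) ^ (-((N : ℝ) + 2 * s))) :
    ∀ ε : ℝ, 0 < ε → ε ≤ 1 → ∀ θ₁ : ℝ, 0 < θ₁ → θ₁ < ε * θ₂ →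
      ∃ C' : ℝ, 0 < C' ∧ ∀ x ∈ Ω, ∀ y ∈ Ω, ∀ z ∈ {z : ℂ | z ≠ 0 ∧ |z.arg| < θ₁},
        ‖K z x y‖ ≤ C' * z.re ^ (-((N : ℝ) / (2 * s))) *
          (1 + ‖x - y‖ * (b * ‖z‖) ^ (-(1 / (2 * s)))) ^
            (-(((N : ℝ) + 2 * s) * (1 - ε))) :=
  fractional_kernel_complex_time_bounds_general N s hs0 Ω θ₂ hθ₂ b C hb hC K hKhol h1 h2
end
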